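/- arXiv:2406.03550 — 7 statements merged into one kernel-verified Lean document; each statement's English description precedes it below -/
import Mathlib

section
/- Let V be a finite-dimensional real vector space and Σ : V → End(V) a linear map that is symmetric in the sense that Σ(u)(v) = Σ(v)(u) for all u, v ∈ V. For an alternating multilinear map α : V^k → V define δ_Σα : V^{k+1} → V by δ_Σα(v₀,…,v_k) = Σ_{i=0}^{k} (−1)^i (Σ(v_i)·α)(v₀,…,v̂_i,…,v_k). Then for all v₀,…,v_k ∈ V one has δ_Σα(v₀,…,v_k) = Σ_{i=0}^{k} (−1)^i Σ(α(v₀,…,v̂_i,…,v_k))(v_i). In particular, if h ⊆ End(V) is a subspace with Σ(v) ∈ h for all v ∈ V, then δ_Σα lies in h∧Λ^kV*. -/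
/-!
The terms of `δ_Σ α` in which `Σ(vᵢ)` acts on an argument of `α` add up to the twice
alternatized symmetric bilinear map `(x, y) ↦ α(Σ(x)y, ·)`, which vanishes for the same reason
as `d ∘ d = 0`. The remaining terms are `Σ(vᵢ)(α(…)) = Σ(α(…))(vᵢ)`, and expanding `α` in a basis
`(b_c)` of `V` writes their alternating sum as `∑_c Σ(b_c) ∧ (b_c^* ∘ α)`.
-/

namespace AlternatingMap

open Fin Function

variable {R M N P : Type*} [CommRing R] [AddCommGroup M] [AddCommGroup N] [AddCommGroup P]
  [Module R M] [Module R N] [Module R P] {n : ℕ}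

theorem alternatizeUncurryFin_curryLeft_comp_apply (α : M [⋀^Fin (n + 1)]→ₗ[R] N)
    (X : M →ₗ[R] M) (w : Fin (n + 1) → M) :
    alternatizeUncurryFin (curryLeft α ∘ₗ X) w = ∑ j, α (update w j (X (w j))) := by
  simp [alternatizeUncurryFin_apply, ← map_insertNth]

theorem sum_neg_one_pow_smul_sum_map_update_eq_zero (α : M [⋀^Fin n]→ₗ[R] N)
    (S : M →ₗ[R] M →ₗ[R] M) (hS : ∀ x y, S x y = S y x) (v : Fin (n + 1) → M) :
    ∑ i : Fin (n + 1), (-1 : R) ^ (i : ℕ) •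
      ∑ j, α (update (i.removeNth v) j (S (v i) (i.removeNth v j))) = 0 := by
  cases n with
  | zero => simp
  | succ n =>
    have := congr($(alternatizeUncurryFin_alternatizeUncurryFinLM_comp_of_symmetric
      (f := S.compr₂ (curryLeft α)) fun x y => by simp only [LinearMap.compr₂_apply, hS]) v)
    -- `alternatizeUncurryFin` is defined with integer signs
    have zsmul_eq (i : ℕ) (x : N) : (-1 : ℤ) ^ i • x = (-1 : R) ^ i • x := by
      rw [← Int.cast_smul_eq_zsmul R]; simp
    simpa [alternatizeUncurryFin_apply, ← alternatizeUncurryFin_curryLeft_comp_apply, zsmul_eq]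
      using this

theorem sum_neg_one_pow_smul_sub_sum_map_update_eq (α : M [⋀^Fin n]→ₗ[R] M)
    (S : M →ₗ[R] M →ₗ[R] M) (hS : ∀ x y, S x y = S y x) (v : Fin (n + 1) → M) :
    ∑ i : Fin (n + 1), (-1 : R) ^ (i : ℕ) •
      (S (v i) (α (i.removeNth v)) - ∑ j, α (update (i.removeNth v) j (S (v i) (i.removeNth v j))))
      = ∑ i : Fin (n + 1), (-1 : R) ^ (i : ℕ) • S (α (i.removeNth v)) (v i) := by
  simp only [smul_sub, Finset.sum_sub_distrib, sum_neg_one_pow_smul_sum_map_update_eq_zero α S hS,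
    sub_zero, hS]

def wedge (X : M →ₗ[R] P) (ω : M [⋀^Fin n]→ₗ[R] R) (v : Fin (n + 1) → M) : P :=
  ∑ i : Fin (n + 1), (-1 : R) ^ (i : ℕ) • ω (i.removeNth v) • X (v i)

theorem sum_neg_one_pow_smul_apply_map_removeNth_eq_sum_wedge {ι : Type*} [Fintype ι]
    (b : Module.Basis ι R N) (S : N →ₗ[R] M →ₗ[R] P) (α : M [⋀^Fin n]→ₗ[R] N) :
    (fun v : Fin (n + 1) → M =>
        ∑ i : Fin (n + 1), (-1 : R) ^ (i : ℕ) • S (α (i.removeNth v)) (v i))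
      = ∑ c, wedge (S (b c)) ((b.coord c).compAlternatingMap α) := by
  ext v
  simp only [wedge, Finset.sum_apply, Finset.sum_comm (γ := ι), ← Finset.smul_sum]
  congr! 2 with i
  conv_lhs => rw [← b.sum_repr (α (i.removeNth v))]
  simp only [map_sum, map_smul, LinearMap.sum_apply, LinearMap.smul_apply,
    LinearMap.compAlternatingMap_apply, Module.Basis.coord_apply]

theorem sum_neg_one_pow_smul_apply_map_removeNth_mem_span_wedge [Module.Free R N]
    [Module.Finite R N] (S : N →ₗ[R] M →ₗ[R] P) (α : M [⋀^Fin n]→ₗ[R] N)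
    (h : Submodule R (M →ₗ[R] P)) (hS : ∀ x, S x ∈ h) :
    (fun v : Fin (n + 1) → M =>
        ∑ i : Fin (n + 1), (-1 : R) ^ (i : ℕ) • S (α (i.removeNth v)) (v i))
      ∈ Submodule.span R {f | ∃ X ∈ h, ∃ ω : M [⋀^Fin n]→ₗ[R] R, f = wedge X ω} := by
  let b := Module.Free.chooseBasis R N
  rw [sum_neg_one_pow_smul_apply_map_removeNth_eq_sum_wedge b]
  exact Submodule.sum_mem _ fun c _ => Submodule.subset_span ⟨_, hS (b c), _, rfl⟩

end AlternatingMap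

/-- For a symmetric (torsion-free) `Σ : V → End(V)` and an alternating `α : Λ^k V* ⊗ V`,
the antisymmetrised action `δ_Σ α (v₀,…,v_k) = Σᵢ (−1)ⁱ (Σ(vᵢ)·α)(v₀,…,v̂ᵢ,…,v_k)` equals
`Σᵢ (−1)ⁱ Σ(α(v₀,…,v̂ᵢ,…,v_k))(vᵢ)`; in particular if `Σ` takes values in a subspace
`h ⊆ End(V)` then `δ_Σ α` lies in `h ∧ Λ^k V*`. -/
theorem shift_by_torsion_free_lies_in_wedge
    (V : Type*) [AddCommGroup V] [Module ℝ V] [FiniteDimensional ℝ V] (k : ℕ)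
    (Sig : V →ₗ[ℝ] V →ₗ[ℝ] V)
    (hsym : ∀ u v : V, Sig u v = Sig v u)
    (α : AlternatingMap ℝ V V (Fin k)) :
    (∀ v : Fin (k + 1) → V,
      (∑ i : Fin (k + 1), ((-1 : ℝ) ^ (i : ℕ)) •
          (Sig (v i) (α (i.removeNth v)) -
            ∑ j : Fin k,
              α (Function.update (i.removeNth v) j (Sig (v i) (i.removeNth v j))))) =
      ∑ i : Fin (k + 1), ((-1 : ℝ) ^ (i : ℕ)) • Sig (α (i.removeNth v)) (v i)) ∧
    ∀ h : Submodule ℝ (V →ₗ[ℝ] V), (∀ v : V, Sig v ∈ h) →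
      ((fun v : Fin (k + 1) → V =>
          ∑ i : Fin (k + 1), ((-1 : ℝ) ^ (i : ℕ)) •
            (Sig (v i) (α (i.removeNth v)) -
              ∑ j : Fin k,
                α (Function.update (i.removeNth v) j (Sig (v i) (i.removeNth v j))))) ∈
        Submodule.span ℝ
          {f : (Fin (k + 1) → V) → V |
            ∃ X ∈ h, ∃ ω : AlternatingMap ℝ V ℝ (Fin k),
              f = fun v : Fin (k + 1) → V =>
                ∑ i : Fin (k + 1), ((-1 : ℝ) ^ (i : ℕ)) • ω (i.removeNth v) • X (v i)}) := by
  have hδ := AlternatingMap.sum_neg_one_pow_smul_sub_sum_map_update_eq α Sig hsym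
  exact ⟨hδ, fun h hSig =>
    funext hδ ▸
      AlternatingMap.sum_neg_one_pow_smul_apply_map_removeNth_mem_span_wedge Sig α h hSig⟩
end

section
/- Let V be a finite-dimensional real vector space, h ⊆ End(V) a subspace, and R : V × V → End(V) a bilinear map with R(u,v) = −R(v,u) and R(u,v) ∈ h for all u, v ∈ V, satisfying the algebraic Bianchi identity R(u,v)(w) + R(v,w)(u) + R(w,u)(v) = 0 for all u, v, w ∈ V. For an alternating multilinear map α : V^k → V define δ_Rα : V^{k+2} → V by δ_Rα(v₀,…,v_{k+1}) = Σ_{0≤i<j≤k+1} (−1)^{i+j} (R(v_i,v_j)·α)(v₀,…,v̂_i,…,v̂_j,…,v_{k+1}). Then δ_Rα lies in h∧Λ^{k+1}V*. -/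
/-!
The natural action splits as `R(x,y)·α = R(x,y) ∘ α - ∑ₗ α(…, R(x,y) wₗ, …)`. Alternated over
all pairs, the second part becomes the alternation over three slots of `α(R(u,v)w, …)`, which
vanishes because cyclic permutations are even and the Bianchi identity kills the cyclic sum. In the
first part, Bianchi and antisymmetry rewrite `R(vᵢ,vⱼ)(α w)` as `R(vᵢ, α w) vⱼ - R(vⱼ, α w) vᵢ`, so
`δ_R α (v) = ∑ₚ (-1)ᵖ β(v̂ₚ)(vₚ)` with `β(w) = ∑_q (-1)^q R(w_q, α(ŵ_q))`, an `h`-valued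
`(k+1)`-form. Expanding `β` in a basis of `h` exhibits `δ_R α` in `h ∧ Λ^{k+1} V*`.
-/

theorem Fin.removeNth_removeNth_succ_of_le {n : ℕ} {α : Type*} (v : Fin (n + 2) → α)
    {i j : Fin (n + 1)} (hij : i ≤ j) :
    i.removeNth (j.succ.removeNth v) = j.removeNth (i.castSucc.removeNth v) := by
  have hlt : i.castSucc < j.succ := Fin.castSucc_lt_succ_iff.mpr hij
  rw [Fin.removeNth_removeNth_eq_swap, Fin.succAbove_of_castSucc_lt _ _ hlt,
    Fin.predAbove_of_castSucc_lt _ _ hlt, Fin.pred_succ]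

namespace AlternatingMap

section Alternation

variable {R M N : Type*} [CommRing R] [AddCommGroup M] [Module R M] [AddCommGroup N] [Module R N]
  {n : ℕ}

def alternatizeUncurryFin₂ :
    (M →ₗ[R] M →ₗ[R] M [⋀^Fin n]→ₗ[R] N) →ₗ[R] M [⋀^Fin (n + 2)]→ₗ[R] N :=
  alternatizeUncurryFinLM ∘ₗ LinearMap.llcomp R M _ _ alternatizeUncurryFinLM

theorem alternatizeUncurryFin₂_apply (f : M →ₗ[R] M →ₗ[R] M [⋀^Fin n]→ₗ[R] N) :
    alternatizeUncurryFin₂ f = alternatizeUncurryFin (alternatizeUncurryFinLM ∘ₗ f) := rfl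

theorem alternatizeUncurryFin₂_flip (f : M →ₗ[R] M →ₗ[R] M [⋀^Fin n]→ₗ[R] N) :
    alternatizeUncurryFin₂ f.flip = -alternatizeUncurryFin₂ f := by
  rw [eq_neg_iff_add_eq_zero, ← map_add, alternatizeUncurryFin₂_apply]
  exact alternatizeUncurryFin_alternatizeUncurryFinLM_comp_of_symmetric fun x y => add_comm _ _

def alternatizeUncurryFin₃ :
    (M →ₗ[R] M →ₗ[R] M →ₗ[R] M [⋀^Fin n]→ₗ[R] N) →ₗ[R] M [⋀^Fin (n + 3)]→ₗ[R] N :=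
  alternatizeUncurryFinLM ∘ₗ LinearMap.llcomp R M _ _ alternatizeUncurryFin₂

theorem alternatizeUncurryFin₃_eq_alternatizeUncurryFin₂
    (T : M →ₗ[R] M →ₗ[R] M →ₗ[R] M [⋀^Fin n]→ₗ[R] N) :
    alternatizeUncurryFin₃ T = alternatizeUncurryFin₂ (T.compr₂ alternatizeUncurryFinLM) := rfl

theorem alternatizeUncurryFin₃_flip (T : M →ₗ[R] M →ₗ[R] M →ₗ[R] M [⋀^Fin n]→ₗ[R] N) :
    alternatizeUncurryFin₃ T.flip = -alternatizeUncurryFin₃ T := by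
  rw [alternatizeUncurryFin₃_eq_alternatizeUncurryFin₂,
    alternatizeUncurryFin₃_eq_alternatizeUncurryFin₂, ← alternatizeUncurryFin₂_flip]
  rfl

theorem alternatizeUncurryFin₃_lflip_comp (T : M →ₗ[R] M →ₗ[R] M →ₗ[R] M [⋀^Fin n]→ₗ[R] N) :
    alternatizeUncurryFin₃ (LinearMap.lflip.toLinearMap ∘ₗ T) = -alternatizeUncurryFin₃ T := by
  have : alternatizeUncurryFin₂ ∘ₗ (LinearMap.lflip.toLinearMap ∘ₗ T) =
      -(alternatizeUncurryFin₂ ∘ₗ T) := by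
    ext1 x
    exact alternatizeUncurryFin₂_flip (T x)
  simp only [alternatizeUncurryFin₃, LinearMap.coe_comp, Function.comp_apply,
    LinearMap.llcomp_apply', this, map_neg]

theorem three_smul_alternatizeUncurryFin₃_eq_zero
    {T : M →ₗ[R] M →ₗ[R] M →ₗ[R] M [⋀^Fin n]→ₗ[R] N}
    (hT : ∀ x y z, T x y z + T y z x + T z x y = 0) :
    3 • alternatizeUncurryFin₃ T = 0 := by
  have hcyc : T + (LinearMap.lflip.toLinearMap ∘ₗ T).flip + LinearMap.lflip.toLinearMap ∘ₗ T.flip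
      = 0 := by
    ext x y z : 3
    exact hT x y z
  -- each cyclic permutation of the arguments is a product of two transpositions
  calc 3 • alternatizeUncurryFin₃ T
      = alternatizeUncurryFin₃ T + alternatizeUncurryFin₃ (LinearMap.lflip.toLinearMap ∘ₗ T).flip
          + alternatizeUncurryFin₃ (LinearMap.lflip.toLinearMap ∘ₗ T.flip) := by
        rw [alternatizeUncurryFin₃_flip, alternatizeUncurryFin₃_lflip_comp,
          alternatizeUncurryFin₃_lflip_comp, alternatizeUncurryFin₃_flip, neg_neg]
        abel
    _ = 0 := by rw [← map_add, ← map_add, hcyc, LinearMap.map_zero]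

def pairAlternation (f : M →ₗ[R] M →ₗ[R] M [⋀^Fin n]→ₗ[R] N) (v : Fin (n + 2) → M) : N :=
  ∑ j : Fin (n + 2), ∑ i : Fin (n + 2),
    if hij : (i : ℕ) < (j : ℕ) then
      ((-1 : R) ^ ((i : ℕ) + (j : ℕ))) •
        f (v i) (v j) (Fin.removeNth ⟨i, lt_of_lt_of_le hij (Nat.lt_succ_iff.mp j.isLt)⟩
          (j.removeNth v))
    else 0

theorem two_smul_pairAlternation {f : M →ₗ[R] M →ₗ[R] M [⋀^Fin n]→ₗ[R] N}
    (hf : ∀ x y, f x y = -f y x) (v : Fin (n + 2) → M) :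
    2 • pairAlternation f v = -alternatizeUncurryFin₂ f v := by
  -- the library formula for `alternatizeUncurryFin₂` runs over the pairs
  -- `(i.castSucc, j.succ)` with `i ≤ j`, whence the sign is off by one
  set Q : N := ∑ i : Fin (n + 1), ∑ j : Fin (n + 1), if i ≤ j then
    ((-1 : R) ^ ((i : ℕ) + (j : ℕ))) •
      f (v i.castSucc) (v j.succ) (j.removeNth (i.castSucc.removeNth v))
    else 0
  have hpair : pairAlternation f v = -Q := by
    rw [pairAlternation, Fin.sum_univ_succ,
      Fintype.sum_eq_zero _ fun i => dif_neg (Nat.not_lt_zero _), zero_add, Finset.sum_comm,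
      Fin.sum_univ_castSucc,
      add_eq_left.mpr (Fintype.sum_eq_zero _ fun j => dif_neg (by simp; omega)),
      ← Finset.sum_neg_distrib]
    refine Fintype.sum_congr _ _ fun i => ?_
    rw [← Finset.sum_neg_distrib]
    refine Fintype.sum_congr _ _ fun j => ?_
    have hlt : ((i.castSucc : Fin (n + 2)) : ℕ) < (j.succ : ℕ) ↔ i ≤ j := by
      rw [Fin.val_castSucc, Fin.val_succ, Fin.le_def]; omega
    by_cases hij : i ≤ j
    · rw [dif_pos (hlt.mpr hij), if_pos hij]
      simp only [Fin.val_castSucc, Fin.eta, Fin.val_succ]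
      rw [Fin.removeNth_removeNth_succ_of_le v hij, ← add_assoc, pow_succ, mul_neg_one, neg_smul]
    · rw [dif_neg (hlt.not.mpr hij), if_neg hij, neg_zero]
  have halt : alternatizeUncurryFin₂ f v = 2 • Q := by
    rw [alternatizeUncurryFin₂_apply, alternatizeUncurryFin_alternatizeUncurryFinLM_comp_apply,
      Finset.smul_sum]
    refine Fintype.sum_congr _ _ fun i => ?_
    rw [Finset.smul_sum, ← Finset.filter_le_eq_Ici, Finset.sum_filter]
    refine Fintype.sum_congr _ _ fun j => ?_
    split_ifs
    · rw [hf (v j.succ), AlternatingMap.neg_apply, sub_neg_eq_add, ← two_smul ℕ, smul_comm,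
        ← Int.cast_smul_eq_zsmul R, Int.cast_pow, Int.cast_neg, Int.cast_one]
    · rw [smul_zero]
  rw [hpair, halt, smul_neg]

end Alternation

section Action

variable {R M N : Type*} [CommRing R] [AddCommGroup M] [Module R M] [AddCommGroup N] [Module R N]
  {k : ℕ}

-- Written through `alternatizeUncurryFin` so that it is alternating for free.
def slotDerivation : {k : ℕ} → (M [⋀^Fin k]→ₗ[R] N) → (M →ₗ[R] M) →ₗ[R] M [⋀^Fin k]→ₗ[R] N
  | 0, _ => 0
  | _ + 1, α => alternatizeUncurryFinLM ∘ₗ LinearMap.llcomp R M M _ α.curryLeft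

theorem slotDerivation_apply (α : M [⋀^Fin k]→ₗ[R] N) (X : M →ₗ[R] M) (w : Fin k → M) :
    slotDerivation α X w = ∑ l, α (Function.update w l (X (w l))) := by
  cases k with
  | zero => simp [slotDerivation]
  | succ m =>
    simp only [slotDerivation, LinearMap.coe_comp, Function.comp_apply,
      alternatizeUncurryFinLM_apply, alternatizeUncurryFin_apply, LinearMap.llcomp_apply,
      curryLeft_apply_apply, ← Fin.insertNth_removeNth, map_insertNth]

def postcompₗ {P ι : Type*} [AddCommGroup P] [Module R P] (α : M [⋀^ι]→ₗ[R] N) :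
    (N →ₗ[R] P) →ₗ[R] M [⋀^ι]→ₗ[R] P where
  toFun g := g.compAlternatingMap α
  map_add' _ _ := rfl
  map_smul' _ _ := rfl

@[simp]
theorem postcompₗ_apply {P ι : Type*} [AddCommGroup P] [Module R P] (α : M [⋀^ι]→ₗ[R] N)
    (g : N →ₗ[R] P) : postcompₗ α g = g.compAlternatingMap α := rfl

def endAction (α : M [⋀^Fin k]→ₗ[R] M) : (M →ₗ[R] M) →ₗ[R] M [⋀^Fin k]→ₗ[R] M :=
  postcompₗ α - slotDerivation α

theorem endAction_apply (α : M [⋀^Fin k]→ₗ[R] M) (X : M →ₗ[R] M) (w : Fin k → M) :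
    endAction α X w = X (α w) - ∑ l, α (Function.update w l (X (w l))) := by
  simp [endAction, slotDerivation_apply]

theorem three_smul_alternatizeUncurryFin₂_compr₂_slotDerivation
    {Rc : M →ₗ[R] M →ₗ[R] M →ₗ[R] M} (hbianchi : ∀ u v w, Rc u v w + Rc v w u + Rc w u v = 0)
    (α : M [⋀^Fin k]→ₗ[R] N) :
    3 • alternatizeUncurryFin₂ (Rc.compr₂ (slotDerivation α)) = 0 := by
  cases k with
  | zero =>
    rw [show Rc.compr₂ (slotDerivation α) = 0 from LinearMap.ext₂ fun _ _ => rfl,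
      LinearMap.map_zero, smul_zero]
  | succ m =>
    refine three_smul_alternatizeUncurryFin₃_eq_zero
      (T := Rc.compr₂ (LinearMap.llcomp R M M _ α.curryLeft)) fun x y z => ?_
    simp only [LinearMap.compr₂_apply, LinearMap.llcomp_apply, ← map_add, hbianchi,
      LinearMap.map_zero]

end Action

section Curvature

variable {R M : Type*} [CommRing R] [AddCommGroup M] [Module R M] {k : ℕ}
  (Rc : M →ₗ[R] M →ₗ[R] M →ₗ[R] M) (α : M [⋀^Fin k]→ₗ[R] M)

def curvatureContraction : M →ₗ[R] M [⋀^Fin k]→ₗ[R] (M →ₗ[R] M) := postcompₗ α ∘ₗ Rc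

def curvatureEval : M →ₗ[R] M →ₗ[R] M [⋀^Fin k]→ₗ[R] M :=
  (LinearMap.lflip.toLinearMap ∘ₗ Rc).flip.compr₂ (postcompₗ α)

@[simp]
theorem curvatureEval_apply (y x : M) (w : Fin k → M) :
    curvatureEval Rc α y x w = Rc x (α w) y := rfl

variable {Rc}

theorem compr₂_endAction_eq (hanti : ∀ u v, Rc u v = -Rc v u)
    (hbianchi : ∀ u v w, Rc u v w + Rc v w u + Rc w u v = 0) :
    Rc.compr₂ (endAction α) =
      (curvatureEval Rc α).flip - curvatureEval Rc α - Rc.compr₂ (slotDerivation α) := by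
  ext x y w
  have := hbianchi x y (α w)
  rw [hanti (α w) x] at this
  simp only [LinearMap.compr₂_apply, endAction_apply, slotDerivation_apply, LinearMap.sub_apply,
    AlternatingMap.sub_apply, LinearMap.flip_apply, curvatureEval_apply,
    LinearMap.neg_apply] at this ⊢
  linear_combination (norm := module) this

theorem alternatizeUncurryFin₂_compr₂_endAction (hanti : ∀ u v, Rc u v = -Rc v u)
    (hbianchi : ∀ u v w, Rc u v w + Rc v w u + Rc w u v = 0) :
    alternatizeUncurryFin₂ (Rc.compr₂ (endAction α)) =
      -(2 • alternatizeUncurryFin₂ (curvatureEval Rc α)) -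
        alternatizeUncurryFin₂ (Rc.compr₂ (slotDerivation α)) := by
  rw [compr₂_endAction_eq α hanti hbianchi,
    map_sub (alternatizeUncurryFin₂ (R := R) (M := M) (N := M)),
    map_sub (alternatizeUncurryFin₂ (R := R) (M := M) (N := M)), alternatizeUncurryFin₂_flip]
  abel

theorem alternatizeUncurryFin₂_curvatureEval_apply (v : Fin (k + 2) → M) :
    alternatizeUncurryFin₂ (curvatureEval Rc α) v =
      ∑ p : Fin (k + 2), (-1 : ℤ) ^ (p : ℕ) •
        alternatizeUncurryFin (curvatureContraction Rc α) (p.removeNth v) (v p) := by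
  rw [alternatizeUncurryFin₂_apply, alternatizeUncurryFin_apply]
  refine Fintype.sum_congr _ _ fun p => ?_
  simp only [LinearMap.coe_comp, Function.comp_apply, alternatizeUncurryFinLM_apply,
    alternatizeUncurryFin_apply, LinearMap.sum_apply, LinearMap.smul_apply,
    curvatureEval_apply, curvatureContraction, postcompₗ_apply,
    LinearMap.compAlternatingMap_apply]

end Curvature

theorem pairAlternation_compr₂_endAction {K V : Type*} [Field K] [CharZero K] [AddCommGroup V]
    [Module K V] {k : ℕ} {Rc : V →ₗ[K] V →ₗ[K] V →ₗ[K] V} (hanti : ∀ u v, Rc u v = -Rc v u)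
    (hbianchi : ∀ u v w, Rc u v w + Rc v w u + Rc w u v = 0) (α : V [⋀^Fin k]→ₗ[K] V)
    (v : Fin (k + 2) → V) :
    pairAlternation (Rc.compr₂ (endAction α)) v =
      ∑ p : Fin (k + 2), (-1 : K) ^ (p : ℕ) •
        alternatizeUncurryFin (curvatureContraction Rc α) (p.removeNth v) (v p) := by
  have hF : ∀ x y, Rc.compr₂ (endAction α) x y = -Rc.compr₂ (endAction α) y x := fun x y => by
    rw [LinearMap.compr₂_apply, LinearMap.compr₂_apply, hanti, map_neg]
  have hslot : alternatizeUncurryFin₂ (Rc.compr₂ (slotDerivation α)) = 0 := by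
    have h3 := three_smul_alternatizeUncurryFin₂_compr₂_slotDerivation hbianchi α
    rwa [← Nat.cast_smul_eq_nsmul K, smul_eq_zero, or_iff_right (by norm_num)] at h3
  have h2 := two_smul_pairAlternation hF v
  rw [alternatizeUncurryFin₂_compr₂_endAction α hanti hbianchi, hslot, sub_zero, neg_apply,
    neg_neg, smul_apply, ← Nat.cast_smul_eq_nsmul K, ← Nat.cast_smul_eq_nsmul K] at h2
  rw [smul_right_injective V (by norm_num) h2, alternatizeUncurryFin₂_curvatureEval_apply]
  simp only [← Int.cast_smul_eq_zsmul K, Int.cast_pow, Int.cast_neg, Int.cast_one]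

end AlternatingMap

section Wedge

variable {K V : Type*} [Field K] [AddCommGroup V] [Module K V]

def wedgeSpan (h : Submodule K (V →ₗ[K] V)) (k : ℕ) : Submodule K ((Fin (k + 2) → V) → V) :=
  Submodule.span K {f | ∃ X ∈ h, ∃ ω : V [⋀^Fin (k + 1)]→ₗ[K] K,
    f = fun v => ∑ i : Fin (k + 2), ((-1 : K) ^ (i : ℕ)) • ω (i.removeNth v) • X (v i)}

theorem sum_neg_one_pow_smul_apply_mem_wedgeSpan {k : ℕ} {h : Submodule K (V →ₗ[K] V)}
    [FiniteDimensional K h] (β : V [⋀^Fin (k + 1)]→ₗ[K] (V →ₗ[K] V)) (hβ : ∀ w, β w ∈ h) :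
    (fun v : Fin (k + 2) → V => ∑ i : Fin (k + 2), (-1 : K) ^ (i : ℕ) • β (i.removeNth v) (v i))
      ∈ wedgeSpan h k := by
  let b := Module.finBasis K h
  let ω a := (b.coord a).compAlternatingMap (β.codRestrict h hβ)
  have hβ_eq : ∀ w, β w = ∑ a, ω a w • (b a : V →ₗ[K] V) := fun w => by
    conv_lhs => rw [show β w = h.subtype (β.codRestrict h hβ w) from rfl,
      ← b.sum_repr (β.codRestrict h hβ w), map_sum]
    simp [ω]
  have hsplit : (fun v : Fin (k + 2) → V =>
      ∑ i : Fin (k + 2), (-1 : K) ^ (i : ℕ) • β (i.removeNth v) (v i)) =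
      ∑ a, fun v => ∑ i : Fin (k + 2),
        ((-1 : K) ^ (i : ℕ)) • ω a (i.removeNth v) • (b a : V →ₗ[K] V) (v i) := by
    funext v
    simp only [hβ_eq, LinearMap.sum_apply, LinearMap.smul_apply, Finset.sum_apply,
      Finset.smul_sum]
    exact Finset.sum_comm
  rw [hsplit]
  exact Submodule.sum_mem _ fun a _ => Submodule.subset_span ⟨b a, (b a).2, ω a, rfl⟩

end Wedge

/-- For a curvature tensor `R : Λ²V → h ⊆ End(V)` satisfying the algebraic Bianchi identity,
and an alternating `α : Λ^k V* ⊗ V`, the double antisymmetrisation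
`δ_R α (v₀,…,v_{k+1}) = Σ_{i<j} (−1)^{i+j} (R(vᵢ,vⱼ)·α)(v₀,…,v̂ᵢ,…,v̂ⱼ,…,v_{k+1})`
lies in `h ∧ Λ^{k+1} V*`. -/
theorem curvature_term_lies_in_wedge
    (V : Type*) [AddCommGroup V] [Module ℝ V] [FiniteDimensional ℝ V] (k : ℕ)
    (h : Submodule ℝ (V →ₗ[ℝ] V))
    (Rc : V →ₗ[ℝ] V →ₗ[ℝ] (V →ₗ[ℝ] V))
    (hanti : ∀ u v : V, Rc u v = - Rc v u)
    (hval : ∀ u v : V, Rc u v ∈ h)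
    (hbianchi : ∀ u v w : V, Rc u v w + Rc v w u + Rc w u v = 0)
    (α : AlternatingMap ℝ V V (Fin k)) :
    (fun v : Fin (k + 2) → V =>
        ∑ j : Fin (k + 2), ∑ i : Fin (k + 2),
          if hij : (i : ℕ) < (j : ℕ) then
            (let w : Fin k → V :=
              Fin.removeNth ⟨(i : ℕ), lt_of_lt_of_le hij (Nat.lt_succ_iff.mp j.isLt)⟩
                (j.removeNth v);
            ((-1 : ℝ) ^ ((i : ℕ) + (j : ℕ))) •
              (Rc (v i) (v j) (α w) -
                ∑ l : Fin k, α (Function.update w l (Rc (v i) (v j) (w l)))))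
          else 0) ∈
      Submodule.span ℝ
        {f : (Fin (k + 2) → V) → V |
          ∃ X ∈ h, ∃ ω : AlternatingMap ℝ V ℝ (Fin (k + 1)),
            f = fun v : Fin (k + 2) → V =>
              ∑ i : Fin (k + 2), ((-1 : ℝ) ^ (i : ℕ)) • ω (i.removeNth v) • X (v i)} := by
  have hβ : ∀ w, AlternatingMap.alternatizeUncurryFin
      (AlternatingMap.curvatureContraction Rc α) w ∈ h := fun w => by
    rw [AlternatingMap.alternatizeUncurryFin_apply]
    exact Submodule.sum_mem _ fun q _ => Submodule.smul_of_tower_mem _ _ (hval _ _)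
  have hδ := sum_neg_one_pow_smul_apply_mem_wedgeSpan _ hβ
  simp only [← AlternatingMap.pairAlternation_compr₂_endAction hanti hbianchi,
    AlternatingMap.pairAlternation, LinearMap.compr₂_apply, AlternatingMap.endAction_apply] at hδ
  exact hδ
end

section
/- In the bigraded setting, assume in addition that the Kähler identities d₊d₋† + d₋†d₊ = 0 and d₋d₊† + d₊†d₋ = 0 hold and that Δ₊ = Δ₋. Then for every (p,q) ∈ ℤ², the space V^{p,q} is the orthogonal direct sum of the five subspaces d₊d₋(V^{p−1,q−1}), d₊†d₋(V^{p+1,q−1}), d₊d₋†(V^{p−1,q+1}), d₊†d₋†(V^{p+1,q+1}), and ker Δ ∩ V^{p,q}. -/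
/-!
Because the bigrading is orthogonal, `d₊†` and `d₋†` have bidegrees `(-1, 0)` and `(0, -1)`, so
all five pieces lie in `V^{p,q}`. The Kähler identities give `Δ = Δ₊ + Δ₋ = 2 Δ₊`, so harmonic
vectors are exactly those killed by `d₊` and `d₊†`; orthogonality of the pieces then follows from
`d₊² = d₋² = 0` and the anticommutation relations by moving operators across the inner product.
For spanning, let `t ∈ V^{p,q}` be orthogonal to the four images. Then `d₋d₊t`, `d₋†d₊t`,
`d₋d₊†t` and `d₋†d₊†t` vanish, so `d₋` and `d₋†` kill `Δ₊t`, whence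
`‖Δ₊t‖² = ⟪Δ₊t, Δ₋t⟫ = ⟪d₋†Δ₊t, d₋†t⟫ + ⟪d₋Δ₊t, d₋t⟫ = 0` and `t` is harmonic.
-/

open LinearMap

section

open Submodule
open scoped InnerProductSpace Function

variable {𝕜 E ι : Type*} [RCLike 𝕜] [NormedAddCommGroup E] [InnerProductSpace 𝕜 E]

theorem DirectSum.IsInternal.mem_of_forall_ne_inner_eq_zero [FiniteDimensional 𝕜 E]
    [DecidableEq ι] {W : ι → Submodule 𝕜 E} (hint : DirectSum.IsInternal W)
    (horth : OrthogonalFamily 𝕜 (fun i => W i) fun i => (W i).subtypeₗᵢ) {i : ι} {x : E}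
    (hx : ∀ j ≠ i, ∀ y ∈ W j, ⟪x, y⟫_𝕜 = 0) : x ∈ W i := by
  -- `x` minus its projection to `W i` is orthogonal to every `W j`, hence to all of `E`.
  set y := x - (W i).starProjection x
  have hy : y ∈ (⨆ j, W j)ᗮ := by
    rw [← iInf_orthogonal, mem_iInf]
    intro j
    rcases eq_or_ne j i with rfl | hj
    · exact sub_starProjection_mem_orthogonal x
    · refine (mem_orthogonal' _ _).mpr fun z hz => ?_
      rw [inner_sub_left, hx j hj z hz,
        isOrtho_iff_inner_eq.mp (horth.isOrtho hj.symm) _ (starProjection_apply_mem _ x) z hz,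
        sub_zero]
  rw [hint.submodule_iSup_eq_top, top_orthogonal_eq_bot, mem_bot, sub_eq_zero] at hy
  exact hy ▸ starProjection_apply_mem _ x

def HasDegree [Add ι] (W : ι → Submodule 𝕜 E) (T : E →ₗ[𝕜] E) (s : ι) : Prop :=
  ∀ i, ∀ x ∈ W i, T x ∈ W (i + s)

namespace HasDegree

variable {W : ι → Submodule 𝕜 E} {S T : E →ₗ[𝕜] E} {s t i j : ι}

theorem apply_mem [Add ι] (hT : HasDegree W T s) {x : E} (hx : x ∈ W i) (h : i + s = j) :
    T x ∈ W j :=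
  h ▸ hT i x hx

theorem map_le [Add ι] (hT : HasDegree W T s) (h : i + s = j) : (W i).map T ≤ W j := by
  rintro _ ⟨x, hx, rfl⟩
  exact hT.apply_mem hx h

theorem comp [AddSemigroup ι] (hS : HasDegree W S s) (hT : HasDegree W T t) :
    HasDegree W (S ∘ₗ T) (t + s) := fun i x hx =>
  hS.apply_mem (hT i x hx) (add_assoc i t s)

theorem adjoint [FiniteDimensional 𝕜 E] [AddGroup ι] [DecidableEq ι]
    (hint : DirectSum.IsInternal W)
    (horth : OrthogonalFamily 𝕜 (fun i => W i) fun i => (W i).subtypeₗᵢ)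
    (hT : HasDegree W T s) : HasDegree W (LinearMap.adjoint T) (-s) := by
  refine fun i x hx => hint.mem_of_forall_ne_inner_eq_zero horth fun j hj y hy => ?_
  have hij : i ≠ j + s := by rintro rfl; simp at hj
  rw [adjoint_inner_left]
  exact isOrtho_iff_inner_eq.mp (horth.isOrtho hij) x hx _ (hT j y hy)

end HasDegree

section Anticommute

variable {R M : Type*} [Ring R] [AddCommGroup M] [Module R M]

def Anticommute (S T : M →ₗ[R] M) : Prop :=
  S ∘ₗ T + T ∘ₗ S = 0

variable {S T : M →ₗ[R] M}

theorem Anticommute.symm (h : Anticommute S T) : Anticommute T S := by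
  rwa [Anticommute, add_comm]

theorem Anticommute.apply (h : Anticommute S T) (x : M) : S (T x) = -T (S x) :=
  eq_neg_of_add_eq_zero_left (by simpa using LinearMap.congr_fun h x)

end Anticommute

variable [FiniteDimensional 𝕜 E]

theorem Anticommute.adjoint {S T : E →ₗ[𝕜] E} (h : Anticommute S T) :
    Anticommute (LinearMap.adjoint S) (LinearMap.adjoint T) := by
  rw [Anticommute, ← adjoint_comp, ← adjoint_comp, ← map_add, h.symm, map_zero]

noncomputable def hodgeLaplacian (T : E →ₗ[𝕜] E) : E →ₗ[𝕜] E :=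
  T ∘ₗ adjoint T + adjoint T ∘ₗ T

theorem inner_hodgeLaplacian_right (T : E →ₗ[𝕜] E) (u v : E) :
    ⟪u, hodgeLaplacian T v⟫_𝕜 = ⟪adjoint T u, adjoint T v⟫_𝕜 + ⟪T u, T v⟫_𝕜 := by
  rw [hodgeLaplacian, LinearMap.add_apply, inner_add_right, comp_apply, comp_apply,
    ← adjoint_inner_left T (adjoint T v) u, adjoint_inner_right T u (T v)]

theorem hodgeLaplacian_apply_eq_zero_iff (T : E →ₗ[𝕜] E) (v : E) :
    hodgeLaplacian T v = 0 ↔ T v = 0 ∧ adjoint T v = 0 := by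
  refine ⟨fun h => ?_, fun ⟨hT, hT'⟩ => by simp [hodgeLaplacian, hT, hT']⟩
  have hv := inner_hodgeLaplacian_right T v v
  rw [h, inner_zero_right, inner_self_eq_norm_sq_to_K, inner_self_eq_norm_sq_to_K] at hv
  norm_cast at hv
  simpa [and_comm] using (add_eq_zero_iff_of_nonneg (sq_nonneg _) (sq_nonneg _)).mp hv.symm

theorem hodgeLaplacian_add {A B : E →ₗ[𝕜] E} (hK₁ : Anticommute A (adjoint B))
    (hK₂ : Anticommute B (adjoint A)) :
    hodgeLaplacian (A + B) = hodgeLaplacian A + hodgeLaplacian B := by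
  calc hodgeLaplacian (A + B)
      = hodgeLaplacian A + hodgeLaplacian B + (A ∘ₗ adjoint B + adjoint B ∘ₗ A)
          + (B ∘ₗ adjoint A + adjoint A ∘ₗ B) := by
        simp only [hodgeLaplacian, map_add, add_comp, comp_add]; abel
    _ = hodgeLaplacian A + hodgeLaplacian B := by rw [hK₁, hK₂, add_zero, add_zero]

theorem hodgeLaplacian_add_apply_eq_zero_iff {A B : E →ₗ[𝕜] E} (hK₁ : Anticommute A (adjoint B))
    (hK₂ : Anticommute B (adjoint A)) (hΔ : hodgeLaplacian A = hodgeLaplacian B) (v : E) :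
    hodgeLaplacian (A + B) v = 0 ↔ A v = 0 ∧ adjoint A v = 0 := by
  rw [hodgeLaplacian_add hK₁ hK₂, ← hΔ, LinearMap.add_apply, ← two_smul 𝕜, smul_eq_zero,
    or_iff_right two_ne_zero, hodgeLaplacian_apply_eq_zero_iff]

theorem range_isOrtho_range_adjoint {T : E →ₗ[𝕜] E} (hT : T ∘ₗ T = 0) :
    range T ⟂ range (adjoint T) := by
  rw [isOrtho_iff_inner_eq]
  rintro _ ⟨u, rfl⟩ _ ⟨v, rfl⟩
  rw [adjoint_inner_right, ← comp_apply, hT, LinearMap.zero_apply, inner_zero_left]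

theorem range_comp_isOrtho_range_comp_adjoint {B C : E →ₗ[𝕜] E} (hB : B ∘ₗ B = 0)
    (hCB : Anticommute C B) (hCB' : Anticommute C (adjoint B)) :
    range (C ∘ₗ B) ⟂ range (C ∘ₗ adjoint B) := by
  have hB' : adjoint B ∘ₗ adjoint B = 0 := by rw [← adjoint_comp, hB, map_zero]
  rw [isOrtho_iff_inner_eq]
  rintro _ ⟨u, rfl⟩ _ ⟨v, rfl⟩
  simp only [comp_apply]
  rw [hCB.apply u, inner_neg_left, ← adjoint_inner_right, hCB'.symm.apply (adjoint B v),
    ← comp_apply (adjoint B), hB', LinearMap.zero_apply, map_zero, neg_zero, inner_zero_right,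
    neg_zero]

theorem adjoint_apply_eq_zero_of_mem_orthogonal_map {T : E →ₗ[𝕜] E} {U : Submodule 𝕜 E} {t : E}
    (hU : adjoint T t ∈ U) (ht : t ∈ (U.map T)ᗮ) : adjoint T t = 0 := by
  rw [← inner_self_eq_zero (𝕜 := 𝕜), adjoint_inner_left]
  exact (mem_orthogonal' _ _).mp ht _ (mem_map_of_mem hU)

theorem hodgeLaplacian_apply_eq_zero_of_anticommute {A B : E →ₗ[𝕜] E} (hAB : Anticommute A B)
    (hK₁ : Anticommute A (adjoint B)) (hK₂ : Anticommute B (adjoint A))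
    (hΔ : hodgeLaplacian A = hodgeLaplacian B) {t : E} (hBA : B (A t) = 0)
    (hB'A : adjoint B (A t) = 0) (hBA' : B (adjoint A t) = 0)
    (hB'A' : adjoint B (adjoint A t) = 0) : hodgeLaplacian A t = 0 := by
  have hB : B (hodgeLaplacian A t) = 0 := by
    simp only [hodgeLaplacian, LinearMap.add_apply, comp_apply, map_add]
    rw [hAB.symm.apply (adjoint A t), hK₂.apply (A t), hBA', hBA, map_zero, map_zero,
      neg_zero, add_zero]
  have hB' : adjoint B (hodgeLaplacian A t) = 0 := by
    simp only [hodgeLaplacian, LinearMap.add_apply, comp_apply, map_add]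
    rw [hK₁.symm.apply (adjoint A t), hAB.adjoint.symm.apply (A t), hB'A', hB'A,
      map_zero, map_zero, neg_zero, add_zero]
  rw [← inner_self_eq_zero (𝕜 := 𝕜)]
  nth_rw 2 [hΔ]
  rw [inner_hodgeLaplacian_right, hB, hB', inner_zero_left, inner_zero_left, add_zero]

noncomputable def hodgeSummands [AddCommGroup ι] (W : ι → Submodule 𝕜 E) (A B : E →ₗ[𝕜] E)
    (a b i : ι) : Fin 5 → Submodule 𝕜 E :=
  ![(W (i - a - b)).map (A ∘ₗ B), (W (i + a - b)).map (adjoint A ∘ₗ B),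
    (W (i - a + b)).map (A ∘ₗ adjoint B), (W (i + a + b)).map (adjoint A ∘ₗ adjoint B),
    ker (hodgeLaplacian (A + B)) ⊓ W i]

section HodgePieces

variable [AddCommGroup ι] {W : ι → Submodule 𝕜 E} {A B : E →ₗ[𝕜] E} {a b i : ι}

theorem hodgeSummands_le [DecidableEq ι] (hint : DirectSum.IsInternal W)
    (horth : OrthogonalFamily 𝕜 (fun i => W i) fun i => (W i).subtypeₗᵢ)
    (hA : HasDegree W A a) (hB : HasDegree W B b) (k : Fin 5) :
    hodgeSummands W A B a b i k ≤ W i := by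
  have hA' := hA.adjoint hint horth
  have hB' := hB.adjoint hint horth
  fin_cases k
  · exact (hA.comp hB).map_le (by abel)
  · exact (hA'.comp hB).map_le (by abel)
  · exact (hA.comp hB').map_le (by abel)
  · exact (hA'.comp hB').map_le (by abel)
  · exact inf_le_right

theorem iSup_hodgeSummands [DecidableEq ι] (hint : DirectSum.IsInternal W)
    (horth : OrthogonalFamily 𝕜 (fun i => W i) fun i => (W i).subtypeₗᵢ)
    (hA : HasDegree W A a) (hB : HasDegree W B b) (hAB : Anticommute A B)
    (hK₁ : Anticommute A (adjoint B)) (hK₂ : Anticommute B (adjoint A))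
    (hΔ : hodgeLaplacian A = hodgeLaplacian B) :
    ⨆ k, hodgeSummands W A B a b i k = W i := by
  set S := ⨆ k, hodgeSummands W A B a b i k
  have hS : S ≤ W i := iSup_le (hodgeSummands_le hint horth hA hB)
  suffices Sᗮ ⊓ W i ≤ S by
    rw [← sup_orthogonal_inf_of_hasOrthogonalProjection hS, sup_eq_left.mpr this]
  rintro t ⟨htS, ht⟩
  have hperp : ∀ k, t ∈ (hodgeSummands W A B a b i k)ᗮ := fun k => orthogonal_le (le_iSup _ k) htS
  have hA' := hA.adjoint hint horth
  have hB' := hB.adjoint hint horth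
  have hB'A' : adjoint (A ∘ₗ B) t = 0 := adjoint_apply_eq_zero_of_mem_orthogonal_map
    (((hA.comp hB).adjoint hint horth).apply_mem ht (by abel)) (hperp 0)
  have hB'A : adjoint (adjoint A ∘ₗ B) t = 0 := adjoint_apply_eq_zero_of_mem_orthogonal_map
    (((hA'.comp hB).adjoint hint horth).apply_mem ht (by abel)) (hperp 1)
  have hBA' : adjoint (A ∘ₗ adjoint B) t = 0 := adjoint_apply_eq_zero_of_mem_orthogonal_map
    (((hA.comp hB').adjoint hint horth).apply_mem ht (by abel)) (hperp 2)
  have hBA : adjoint (adjoint A ∘ₗ adjoint B) t = 0 := adjoint_apply_eq_zero_of_mem_orthogonal_map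
    (((hA'.comp hB').adjoint hint horth).apply_mem ht (by abel)) (hperp 3)
  simp only [adjoint_comp, adjoint_adjoint, comp_apply] at hB'A' hB'A hBA' hBA
  have hharm := hodgeLaplacian_apply_eq_zero_of_anticommute hAB hK₁ hK₂ hΔ hBA hB'A hBA' hB'A'
  refine le_iSup (hodgeSummands W A B a b i) 4 ⟨?_, ht⟩
  exact (hodgeLaplacian_add_apply_eq_zero_iff hK₁ hK₂ hΔ t).mpr
    ((hodgeLaplacian_apply_eq_zero_iff A t).mp hharm)

theorem hodgeSummands_pairwise_isOrtho (hA : A ∘ₗ A = 0) (hB : B ∘ₗ B = 0)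
    (hAB : Anticommute A B) (hK₁ : Anticommute A (adjoint B)) (hK₂ : Anticommute B (adjoint A))
    (hΔ : hodgeLaplacian A = hodgeLaplacian B) :
    Pairwise ((· ⟂ ·) on (hodgeSummands W A B a b i)) := by
  have hR₀ : hodgeSummands W A B a b i 0 ≤ range A := map_le_range.trans (range_comp_le_range _ _)
  have hR₁ : hodgeSummands W A B a b i 1 ≤ range (adjoint A) :=
    map_le_range.trans (range_comp_le_range _ _)
  have hR₂ : hodgeSummands W A B a b i 2 ≤ range A := map_le_range.trans (range_comp_le_range _ _)
  have hR₃ : hodgeSummands W A B a b i 3 ≤ range (adjoint A) :=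
    map_le_range.trans (range_comp_le_range _ _)
  have hH : hodgeSummands W A B a b i 4 ≤ ker A ⊓ ker (adjoint A) := fun t ht =>
    (hodgeLaplacian_add_apply_eq_zero_iff hK₁ hK₂ hΔ t).mp (mem_inf.mp ht).1
  have hAA' := range_isOrtho_range_adjoint hA
  have hAH : range A ⟂ ker (adjoint A) := isOrtho_comm.mpr (orthogonal_range A).ge
  have hA'H : range (adjoint A) ⟂ ker A := by
    simpa using isOrtho_comm.mpr (orthogonal_range (adjoint A)).ge
  rw [Std.Symm.pairwise_on]
  intro k l hkl
  fin_cases k <;> fin_cases l <;> try exact absurd hkl (by decide)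
  · exact hAA'.mono hR₀ hR₁
  · exact (range_comp_isOrtho_range_comp_adjoint hB hAB hK₁).mono map_le_range map_le_range
  · exact hAA'.mono hR₀ hR₃
  · exact hAH.mono hR₀ (hH.trans inf_le_right)
  · exact hAA'.symm.mono hR₁ hR₂
  · exact (range_comp_isOrtho_range_comp_adjoint hB hK₂.symm hAB.adjoint).mono map_le_range
      map_le_range
  · exact hA'H.mono hR₁ (hH.trans inf_le_left)
  · exact hAA'.mono hR₂ hR₃
  · exact hAH.mono hR₂ (hH.trans inf_le_right)
  · exact hA'H.mono hR₃ (hH.trans inf_le_left)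

end HodgePieces

end

/-- Filtered Hodge decomposition: in the bigraded setting with the Kähler identities and
`Δ₊ = Δ₋`, each `V^{p,q}` is the orthogonal direct sum of `d₊d₋(V^{p−1,q−1})`,
`d₊†d₋(V^{p+1,q−1})`, `d₊d₋†(V^{p−1,q+1})`, `d₊†d₋†(V^{p+1,q+1})` and the harmonic part
`ker Δ ∩ V^{p,q}`. -/
theorem filtered_hodge_decomposition
    (V : Type*) [NormedAddCommGroup V] [InnerProductSpace ℂ V] [FiniteDimensional ℂ V]
    (W : ℤ × ℤ → Submodule ℂ V)
    (hinternal : DirectSum.IsInternal W)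
    (horth : ∀ i j : ℤ × ℤ, i ≠ j → ∀ x ∈ W i, ∀ y ∈ W j, (inner ℂ x y : ℂ) = 0)
    (dp dm : V →ₗ[ℂ] V)
    (hdp : ∀ p q : ℤ, ∀ x ∈ W (p, q), dp x ∈ W (p + 1, q))
    (hdm : ∀ p q : ℤ, ∀ x ∈ W (p, q), dm x ∈ W (p, q + 1))
    (hdp2 : dp ∘ₗ dp = 0) (hdm2 : dm ∘ₗ dm = 0)
    (hanticomm : dp ∘ₗ dm + dm ∘ₗ dp = 0)
    (hkahler1 : dp ∘ₗ adjoint dm + adjoint dm ∘ₗ dp = 0)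
    (hkahler2 : dm ∘ₗ adjoint dp + adjoint dp ∘ₗ dm = 0)
    (hlap : dp ∘ₗ adjoint dp + adjoint dp ∘ₗ dp = dm ∘ₗ adjoint dm + adjoint dm ∘ₗ dm)
    (p q : ℤ) :
    ∀ Δ : V →ₗ[ℂ] V,
      Δ = (dp + dm) ∘ₗ adjoint (dp + dm) + adjoint (dp + dm) ∘ₗ (dp + dm) →
      ∀ f : Fin 5 → Submodule ℂ V,
        f = ![(W (p - 1, q - 1)).map (dp ∘ₗ dm),
              (W (p + 1, q - 1)).map (adjoint dp ∘ₗ dm),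
              (W (p - 1, q + 1)).map (dp ∘ₗ adjoint dm),
              (W (p + 1, q + 1)).map (adjoint dp ∘ₗ adjoint dm),
              ker Δ ⊓ W (p, q)] →
        (⨆ i : Fin 5, f i) = W (p, q) ∧
        ∀ i j : Fin 5, i ≠ j → ∀ x ∈ f i, ∀ y ∈ f j, (inner ℂ x y : ℂ) = 0 := by
  rintro Δ rfl f hf
  obtain rfl : f = hodgeSummands W dp dm (1, 0) (0, 1) (p, q) := by
    simp [hf, hodgeSummands, hodgeLaplacian]
  have hW : OrthogonalFamily ℂ (fun i => W i) fun i => (W i).subtypeₗᵢ :=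
    .of_pairwise fun i j hij => Submodule.isOrtho_iff_inner_eq.mpr (horth i j hij)
  have hA : HasDegree W dp (1, 0) := fun ⟨p, q⟩ x hx => by simpa using hdp p q x hx
  have hB : HasDegree W dm (0, 1) := fun ⟨p, q⟩ x hx => by simpa using hdm p q x hx
  exact ⟨iSup_hodgeSummands hinternal hW hA hB hanticomm hkahler1 hkahler2 hlap,
    fun i j hij => Submodule.isOrtho_iff_inner_eq.mp
      (hodgeSummands_pairwise_isOrtho hdp2 hdm2 hanticomm hkahler1 hkahler2 hlap hij)⟩
end

section
/- (∂∂̄-lemma.) In the bigraded setting, assume in addition that the Kähler identities d₊d₋† + d₋†d₊ = 0 and d₋d₊† + d₊†d₋ = 0 hold and that Δ₊ = Δ₋. Let α ∈ V^{p,q} satisfy Dα = 0, where D = d₊ + d₋. Then the following are equivalent: (a) α is D-exact, i.e. α ∈ D(V); (b) α is d₊-exact; (c) α is d₋-exact; (d) α is d₊d₋-exact; (e) α is orthogonal to ker Δ ∩ V^{p,q}. -/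
/-!
The Kähler identities kill the cross terms of `Δ = Δ_{d₊ + d₋}`, so `Δ = Δ₊ + Δ₋ = 2 Δ₊ = 2 Δ₋`
and the three Laplacians share their harmonic space `ker Δ = ker d ∩ ker d†`, which is orthogonal
to the image of each `d`. Conversely, the adjoints shift the bidegree backwards, so `Δ₊` preserves
`V^{p,q}`, and an `α ∈ V^{p,q}` orthogonal to the harmonic part of `V^{p,q}` is `Δ₊ β`.
As `d₊ α = 0` this forces `α = d₊ d₊† β`. Splitting `d₊† β = h + Δ₋ δ` with `h` harmonic and using
that `d₊` commutes with `Δ₋` gives `α = Δ₋ (d₊ δ)`, and `d₋ α = 0` then gives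
`α = d₋ d₋† d₊ δ = d₊ d₋ (d₋† δ)`.
-/

open LinearMap

section

variable {𝕜 E : Type*} [RCLike 𝕜] [NormedAddCommGroup E] [InnerProductSpace 𝕜 E]

theorem Submodule.mem_of_forall_ne_mem_orthogonal {ι : Type*} {W : ι → Submodule 𝕜 E}
    (htop : iSup W = ⊤) (horth : Pairwise fun i j => W i ⟂ W j) {j : ι}
    [(W j).HasOrthogonalProjection] {x : E} (hx : ∀ i ≠ j, x ∈ (W i)ᗮ) : x ∈ W j := by
  obtain ⟨a, ha, b, hb, rfl⟩ := (W j).exists_add_mem_mem_orthogonal x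
  suffices hb0 : b ∈ (iSup W)ᗮ by
    rw [htop, Submodule.top_orthogonal_eq_bot, Submodule.mem_bot] at hb0
    simpa [hb0] using ha
  rw [← Submodule.iInf_orthogonal, Submodule.mem_iInf]
  intro i
  rcases eq_or_ne i j with rfl | hij
  · exact hb
  · simpa using (W i)ᗮ.sub_mem (hx i hij) (Submodule.isOrtho_iff_le.mp (horth hij.symm) ha)

theorem Submodule.IsOrtho.eq_zero_of_add_eq_zero {U U' : Submodule 𝕜 E} (h : U ⟂ U') {x y : E}
    (hx : x ∈ U) (hy : y ∈ U') (hxy : x + y = 0) : x = 0 :=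
  Submodule.disjoint_def.mp h.disjoint x hx (eq_neg_of_add_eq_zero_left hxy ▸ neg_mem hy)

variable [FiniteDimensional 𝕜 E]

theorem adjoint_apply_mem {ι : Type*} {W : ι → Submodule 𝕜 E}
    (htop : iSup W = ⊤) (horth : Pairwise fun i j => W i ⟂ W j) {σ : ι → ι}
    (hσ : Function.Injective σ) {d : E →ₗ[𝕜] E} (hd : ∀ i, ∀ x ∈ W i, d x ∈ W (σ i))
    {i : ι} {x : E} (hx : x ∈ W (σ i)) : adjoint d x ∈ W i := by
  refine Submodule.mem_of_forall_ne_mem_orthogonal htop horth fun k hk y hy => ?_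
  rw [adjoint_inner_right]
  exact Submodule.isOrtho_iff_inner_eq.mp (horth (hσ.ne hk)) _ (hd k y hy) _ hx

theorem LinearMap.IsSymmetric.ker_sup_range_eq_top {T : E →ₗ[𝕜] E} (hT : T.IsSymmetric) :
    ker T ⊔ range T = ⊤ := by
  rw [← hT.orthogonal_range, sup_comm, Submodule.sup_orthogonal_of_hasOrthogonalProjection]

theorem LinearMap.IsSymmetric.mem_range_of_forall_mem_ker_inf_inner_eq_zero {T : E →ₗ[𝕜] E}
    (hT : T.IsSymmetric) {K : Submodule 𝕜 E} (hK : ∀ x ∈ K, T x ∈ K) {x : E} (hxK : x ∈ K)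
    (hx : ∀ h ∈ ker T ⊓ K, inner 𝕜 x h = 0) : x ∈ range T := by
  set S := T.restrict hK
  have hS : (⟨x, hxK⟩ : K) ∈ range S := by
    rw [← Submodule.orthogonal_orthogonal (range S), (hT.restrict_invariant hK).orthogonal_range,
      Submodule.mem_orthogonal']
    intro u hu
    exact hx u ⟨by simpa [S] using congrArg Subtype.val (mem_ker.mp hu), u.2⟩
  obtain ⟨y, hy⟩ := hS
  exact ⟨y, congrArg Subtype.val hy⟩

noncomputable def laplacian (d : E →ₗ[𝕜] E) : E →ₗ[𝕜] E := d ∘ₗ adjoint d + adjoint d ∘ₗ d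

theorem laplacian_apply (d : E →ₗ[𝕜] E) (x : E) :
    laplacian d x = d (adjoint d x) + adjoint d (d x) := rfl

theorem laplacian_apply_mem {ι : Type*} {W : ι → Submodule 𝕜 E}
    (htop : iSup W = ⊤) (horth : Pairwise fun i j => W i ⟂ W j) (σ : ι ≃ ι)
    {d : E →ₗ[𝕜] E} (hd : ∀ i, ∀ x ∈ W i, d x ∈ W (σ i)) {i : ι} {x : E} (hx : x ∈ W i) :
    laplacian d x ∈ W i := by
  have hx' : x ∈ W (σ (σ.symm i)) := by rwa [σ.apply_symm_apply]
  refine Submodule.add_mem _ ?_ (adjoint_apply_mem htop horth σ.injective hd (hd i x hx))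
  simpa using hd _ _ (adjoint_apply_mem htop horth σ.injective hd hx')

theorem isSymmetric_laplacian (d : E →ₗ[𝕜] E) : (laplacian d).IsSymmetric :=
  (isSymmetric_self_comp_adjoint d).add (isSymmetric_adjoint_comp_self d)

theorem re_inner_laplacian_self (d : E →ₗ[𝕜] E) (x : E) :
    RCLike.re (inner 𝕜 (laplacian d x) x) = ‖adjoint d x‖ ^ 2 + ‖d x‖ ^ 2 := by
  rw [laplacian_apply, inner_add_left, ← adjoint_inner_right d (adjoint d x) x,
    adjoint_inner_left d x (d x), map_add,
    ← inner_self_eq_norm_sq (𝕜 := 𝕜), ← inner_self_eq_norm_sq (𝕜 := 𝕜)]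

theorem mem_ker_laplacian {d : E →ₗ[𝕜] E} {x : E} :
    x ∈ ker (laplacian d) ↔ d x = 0 ∧ adjoint d x = 0 := by
  refine ⟨fun hx => ?_, fun ⟨h, h'⟩ => by simp [laplacian_apply, h, h']⟩
  have hsum := re_inner_laplacian_self d x
  rw [mem_ker.mp hx, inner_zero_left, map_zero, eq_comm,
    add_eq_zero_iff_of_nonneg (by positivity) (by positivity)] at hsum
  simpa [and_comm] using hsum

theorem inner_eq_zero_of_mem_range_of_mem_ker_laplacian {d : E →ₗ[𝕜] E} {x h : E}
    (hx : x ∈ range d) (hh : h ∈ ker (laplacian d)) : inner 𝕜 x h = 0 := by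
  obtain ⟨y, rfl⟩ := hx
  rw [← adjoint_inner_right, (mem_ker_laplacian.mp hh).2, inner_zero_right]

theorem laplacian_apply_eq_of_map_eq_zero {d : E →ₗ[𝕜] E} (hd2 : d ∘ₗ d = 0) {β : E}
    (hβ : d (laplacian d β) = 0) : laplacian d β = d (adjoint d β) := by
  have hdd : ∀ y, d (d y) = 0 := fun y => congr($hd2 y)
  have : adjoint d (d β) = 0 := by
    rw [← mem_ker, ← ker_self_comp_adjoint, mem_ker, comp_apply]
    simpa [laplacian_apply, hdd] using hβ
  rw [laplacian_apply, this, add_zero]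

variable {dp dm : E →ₗ[𝕜] E}

theorem laplacian_add_of_anticomm (h₁ : dp ∘ₗ adjoint dm + adjoint dm ∘ₗ dp = 0)
    (h₂ : dm ∘ₗ adjoint dp + adjoint dp ∘ₗ dm = 0) :
    laplacian (dp + dm) = laplacian dp + laplacian dm := by
  simp only [laplacian, map_add, add_comp, comp_add]
  rw [eq_neg_of_add_eq_zero_left h₁, eq_neg_of_add_eq_zero_left h₂]
  abel

theorem comp_self_comp_adjoint_comm (hanti : dp ∘ₗ dm + dm ∘ₗ dp = 0)
    (h₁ : dp ∘ₗ adjoint dm + adjoint dm ∘ₗ dp = 0) :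
    dp ∘ₗ dm ∘ₗ adjoint dm = (dm ∘ₗ adjoint dm) ∘ₗ dp := by
  simp only [← Module.End.mul_eq_comp] at hanti h₁ ⊢
  rw [← mul_assoc, eq_neg_of_add_eq_zero_left hanti, neg_mul, mul_assoc,
    eq_neg_of_add_eq_zero_left h₁, mul_neg, neg_neg, mul_assoc]

theorem comp_adjoint_comp_self_comm (hanti : dp ∘ₗ dm + dm ∘ₗ dp = 0)
    (h₁ : dp ∘ₗ adjoint dm + adjoint dm ∘ₗ dp = 0) :
    dp ∘ₗ adjoint dm ∘ₗ dm = (adjoint dm ∘ₗ dm) ∘ₗ dp := by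
  simp only [← Module.End.mul_eq_comp] at hanti h₁ ⊢
  rw [← mul_assoc, eq_neg_of_add_eq_zero_left h₁, neg_mul, mul_assoc,
    eq_neg_of_add_eq_zero_left hanti, mul_neg, neg_neg, mul_assoc]

theorem comp_laplacian_comm (hanti : dp ∘ₗ dm + dm ∘ₗ dp = 0)
    (h₁ : dp ∘ₗ adjoint dm + adjoint dm ∘ₗ dp = 0) :
    dp ∘ₗ laplacian dm = laplacian dm ∘ₗ dp := by
  rw [laplacian, comp_add, add_comp, comp_self_comp_adjoint_comm hanti h₁,
    comp_adjoint_comp_self_comm hanti h₁]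

theorem mem_range_comp_of_mem_range_laplacian (hdp2 : dp ∘ₗ dp = 0) (hdm2 : dm ∘ₗ dm = 0)
    (hanti : dp ∘ₗ dm + dm ∘ₗ dp = 0) (h₁ : dp ∘ₗ adjoint dm + adjoint dm ∘ₗ dp = 0)
    (hlap : laplacian dp = laplacian dm) {α : E} (hα : α ∈ range (laplacian dp))
    (hdpα : dp α = 0) (hdmα : dm α = 0) : α ∈ range (dp ∘ₗ dm) := by
  obtain ⟨β, rfl⟩ := hα
  obtain ⟨h, hh, _, ⟨δ, rfl⟩, hsplit⟩ := Submodule.mem_sup.mp <|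
    (isSymmetric_laplacian dm).ker_sup_range_eq_top.symm ▸ Submodule.mem_top (x := adjoint dp β)
  have hdph : dp h = 0 := (mem_ker_laplacian.mp (hlap ▸ hh)).1
  have hαδ : laplacian dp β = laplacian dm (dp δ) := by
    rw [laplacian_apply_eq_of_map_eq_zero hdp2 hdpα, ← hsplit, map_add, hdph, zero_add,
      ← comp_apply, comp_laplacian_comm hanti h₁, comp_apply]
  rw [hαδ] at hdmα ⊢
  rw [laplacian_apply_eq_of_map_eq_zero hdm2 hdmα]
  exact ⟨adjoint dm δ, congr($(comp_self_comp_adjoint_comm hanti h₁) δ)⟩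

end

/-- The ∂∂̄-lemma for the bigraded setting with Kähler identities and `Δ₊ = Δ₋`: for a
`D`-closed `α ∈ V^{p,q}`, being `D`-exact, `d₊`-exact, `d₋`-exact, `d₊d₋`-exact, and being
orthogonal to the harmonic part of `V^{p,q}` are all equivalent. -/
theorem del_delbar_lemma
    (V : Type*) [NormedAddCommGroup V] [InnerProductSpace ℂ V] [FiniteDimensional ℂ V]
    (W : ℤ × ℤ → Submodule ℂ V)
    (hinternal : DirectSum.IsInternal W)
    (horth : ∀ i j : ℤ × ℤ, i ≠ j → ∀ x ∈ W i, ∀ y ∈ W j, (inner ℂ x y : ℂ) = 0)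
    (dp dm : V →ₗ[ℂ] V)
    (hdp : ∀ p q : ℤ, ∀ x ∈ W (p, q), dp x ∈ W (p + 1, q))
    (hdm : ∀ p q : ℤ, ∀ x ∈ W (p, q), dm x ∈ W (p, q + 1))
    (hdp2 : dp ∘ₗ dp = 0) (hdm2 : dm ∘ₗ dm = 0)
    (hanticomm : dp ∘ₗ dm + dm ∘ₗ dp = 0)
    (hkahler1 : dp ∘ₗ adjoint dm + adjoint dm ∘ₗ dp = 0)
    (hkahler2 : dm ∘ₗ adjoint dp + adjoint dp ∘ₗ dm = 0)
    (hlap : dp ∘ₗ adjoint dp + adjoint dp ∘ₗ dp = dm ∘ₗ adjoint dm + adjoint dm ∘ₗ dm)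
    (p q : ℤ) (α : V) (hα : α ∈ W (p, q)) (hclosed : (dp + dm) α = 0) :
    ∀ Δ : V →ₗ[ℂ] V,
      Δ = (dp + dm) ∘ₗ adjoint (dp + dm) + adjoint (dp + dm) ∘ₗ (dp + dm) →
      List.TFAE
        [α ∈ LinearMap.range (dp + dm),
         α ∈ LinearMap.range dp,
         α ∈ LinearMap.range dm,
         α ∈ LinearMap.range (dp ∘ₗ dm),
         ∀ h ∈ ker Δ ⊓ W (p, q), (inner ℂ α h : ℂ) = 0] := by
  intro Δ hΔ
  replace hΔ : Δ = laplacian (dp + dm) := hΔ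
  have hlap' : laplacian dp = laplacian dm := hlap
  have hΔ_two : Δ = (2 : ℂ) • laplacian dp := by
    rw [hΔ, laplacian_add_of_anticomm hkahler1 hkahler2, ← hlap', two_smul]
  have hker : ker Δ = ker (laplacian dp) := by rw [hΔ_two, ker_smul _ _ two_ne_zero]
  have hW : Pairwise fun i j => W i ⟂ W j := fun i j hij =>
    Submodule.isOrtho_iff_inner_eq.mpr (horth i j hij)
  have hdpα : dp α = 0 :=
    (hW (i := (p + 1, q)) (j := (p, q + 1)) (by simp)).eq_zero_of_add_eq_zero
      (hdp p q α hα) (hdm p q α hα) hclosed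
  have hdmα : dm α = 0 := by simpa [hdpα] using hclosed
  have hΔW : ∀ x ∈ W (p, q), laplacian dp x ∈ W (p, q) := fun x hx =>
    laplacian_apply_mem hinternal.submodule_iSup_eq_top hW
      ((Equiv.addRight 1).prodCongr (Equiv.refl ℤ)) (fun ⟨a, b⟩ => hdp a b) hx
  tfae_have 1 → 5 := fun hD h hh =>
    inner_eq_zero_of_mem_range_of_mem_ker_laplacian hD (hΔ ▸ hh.1)
  tfae_have 2 → 5 := fun hp h hh =>
    inner_eq_zero_of_mem_range_of_mem_ker_laplacian hp (hker ▸ hh.1)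
  tfae_have 3 → 5 := fun hm h hh =>
    inner_eq_zero_of_mem_range_of_mem_ker_laplacian hm (hlap' ▸ hker ▸ hh.1)
  tfae_have 4 → 1 := by
    rw [← add_zero (dp ∘ₗ dm), ← hdm2, ← add_comp]
    exact fun h => range_comp_le_range _ _ h
  tfae_have 4 → 2 := fun h => range_comp_le_range _ _ h
  tfae_have 4 → 3 := by
    rw [eq_neg_of_add_eq_zero_left hanticomm, range_neg]
    exact fun h => range_comp_le_range _ _ h
  tfae_have 5 → 4 := fun h5 =>
    mem_range_comp_of_mem_range_laplacian hdp2 hdm2 hanticomm hkahler1 hlap'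
      ((isSymmetric_laplacian dp).mem_range_of_forall_mem_ker_inf_inner_eq_zero hΔW hα
        (hker ▸ h5)) hdpα hdmα
  tfae_finish
end

section
/- In an algebraic Courant algebroid over a commutative ring R whose underlying module E is faithful, the anchor is a bracket homomorphism: for all u, v ∈ E and all f ∈ R, ρ([u,v])(f) = ρ(u)(ρ(v)(f)) − ρ(v)(ρ(u)(f)). -/
/-- An algebraic Courant algebroid over a commutative ring `R`: an `R`-module `E` with a
bracket, a symmetric `R`-bilinear pairing, an anchor valued in derivations of `R`, and a map
`𝒟 : R → E`, satisfying the Courant algebroid axioms. -/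
structure AlgebraicCourantAlgebroid (R : Type*) [CommRing R]
    (E : Type*) [AddCommGroup E] [Module R E] where
  /-- the Dorfman bracket -/
  bracket : E → E → E
  bracket_add_left : ∀ u v w : E, bracket (u + v) w = bracket u w + bracket v w
  bracket_add_right : ∀ u v w : E, bracket u (v + w) = bracket u v + bracket u w
  /-- the symmetric `R`-bilinear pairing -/
  pair : E →ₗ[R] E →ₗ[R] R
  pair_comm : ∀ u v : E, pair u v = pair v u
  /-- the anchor map, assigning to each `u : E` a derivation of `R` -/
  rho : E → R → R
  rho_add_left : ∀ u v : E, ∀ f : R, rho (u + v) f = rho u f + rho v f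
  rho_add_right : ∀ u : E, ∀ f g : R, rho u (f + g) = rho u f + rho u g
  rho_leibniz : ∀ u : E, ∀ f g : R, rho u (f * g) = f * rho u g + g * rho u f
  /-- the map `𝒟 : R → E`, adjoint of the anchor -/
  Dop : R → E
  pair_Dop : ∀ f : R, ∀ w : E, pair (Dop f) w = rho w f
  jacobi : ∀ u v w : E,
    bracket u (bracket v w) = bracket (bracket u v) w + bracket v (bracket u w)
  bracket_smul : ∀ u : E, ∀ f : R, ∀ v : E,
    bracket u (f • v) = f • bracket u v + rho u f • v
  rho_pair : ∀ u v w : E,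
    rho u (pair v w) = pair (bracket u v) w + pair v (bracket u w)
  bracket_symm : ∀ u v : E, bracket u v + bracket v u = Dop (pair u v)

/-! Expanding the Jacobi identity `[u,[v,f w]] = [[u,v],f w] + [v,[u,f w]]` with the Leibniz
rule, everything cancels against `f` times the Jacobi identity for `w` except
`(ρ([u,v])f − ρ(u)ρ(v)f + ρ(v)ρ(u)f) • w`. So this scalar annihilates `E`, and faithfulness
makes it zero. -/

namespace AlgebraicCourantAlgebroid

variable {R : Type*} [CommRing R] {E : Type*} [AddCommGroup E] [Module R E]
  (C : AlgebraicCourantAlgebroid R E)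

theorem rho_bracket_sub_commutator_smul_eq_zero (u v w : E) (f : R) :
    (C.rho (C.bracket u v) f - (C.rho u (C.rho v f) - C.rho v (C.rho u f))) • w = 0 := by
  have jacobi_smul := C.jacobi u v (f • w)
  simp only [C.bracket_smul, C.bracket_add_right] at jacobi_smul
  rw [C.jacobi u v w] at jacobi_smul
  linear_combination (norm := module) -jacobi_smul

end AlgebraicCourantAlgebroid

/-- In an algebraic Courant algebroid whose underlying module is faithful, the anchor is a
bracket homomorphism: `ρ([u,v]) = ρ(u)∘ρ(v) − ρ(v)∘ρ(u)`. -/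
theorem anchor_bracket_hom {R : Type*} [CommRing R] {E : Type*} [AddCommGroup E] [Module R E]
    (C : AlgebraicCourantAlgebroid R E)
    (hfaithful : ∀ f : R, (∀ x : E, f • x = 0) → f = 0) :
    ∀ u v : E, ∀ f : R,
      C.rho (C.bracket u v) f = C.rho u (C.rho v f) - C.rho v (C.rho u f) := by
  intro u v f
  exact sub_eq_zero.mp <| hfaithful _ fun w =>
    C.rho_bracket_sub_commutator_smul_eq_zero u v w f
end

section
/- In an algebraic Courant algebroid over a commutative ring R whose underlying module E is faithful and whose pairing is unital (i.e. there exist u₀, v₀ ∈ E with ⟨u₀, v₀⟩ = 1), one has ρ(𝒟f) = 0 for every f ∈ R; that is, the composition ρ ∘ 𝒟 vanishes (the algebroid analogue of ρ ∘ ρ* = 0). -/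
namespace AlgebraicCourantAlgebroid

variable {R : Type*} [CommRing R] {E : Type*} [AddCommGroup E] [Module R E]
  (C : AlgebraicCourantAlgebroid R E)

theorem rho_bracket_defect_smul_eq_zero (u v x : E) (g : R) :
    (C.rho u (C.rho v g) - C.rho v (C.rho u g) - C.rho (C.bracket u v) g) • x = 0 := by
  have hgx := C.jacobi u v (g • x)
  have hx := C.jacobi u v x
  simp only [C.bracket_smul, C.bracket_add_right] at hgx
  linear_combination (norm := module) hgx - g • hx

theorem rho_bracket (hfaithful : ∀ f : R, (∀ x : E, f • x = 0) → f = 0) (u v : E) (g : R) :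
    C.rho (C.bracket u v) g = C.rho u (C.rho v g) - C.rho v (C.rho u g) := by
  have h := hfaithful _ (C.rho_bracket_defect_smul_eq_zero u v · g)
  linear_combination -h

theorem rho_Dop_pair (hfaithful : ∀ f : R, (∀ x : E, f • x = 0) → f = 0) (u v : E) (g : R) :
    C.rho (C.Dop (C.pair u v)) g = 0 := by
  rw [← C.bracket_symm, C.rho_add_left, C.rho_bracket hfaithful, C.rho_bracket hfaithful]
  ring

end AlgebraicCourantAlgebroid

/-- In an algebraic Courant algebroid with faithful underlying module and unital pairing,
`ρ ∘ 𝒟 = 0`. -/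
theorem anchor_comp_Dop_eq_zero {R : Type*} [CommRing R] {E : Type*} [AddCommGroup E]
    [Module R E] (C : AlgebraicCourantAlgebroid R E)
    (hfaithful : ∀ f : R, (∀ x : E, f • x = 0) → f = 0)
    (hunital : ∃ u₀ v₀ : E, C.pair u₀ v₀ = 1) :
    ∀ f g : R, C.rho (C.Dop f) g = 0 := by
  intro f g
  obtain ⟨u₀, v₀, huv⟩ := hunital
  have hf : C.pair (f • u₀) v₀ = f := by simp [huv]
  rw [← hf]
  exact C.rho_Dop_pair hfaithful _ _ g
end

section
/- Let D be a Courant algebroid connection on an algebraic Courant algebroid. Then its torsion T(u,v,w) := ⟨D_u v − D_v u − [u,v], w⟩ + ⟨D_w u, v⟩ is totally antisymmetric in (u,v,w) (it changes sign under swapping any two arguments) and is R-linear in each argument: T(f·u, v, w) = T(u, f·v, w) = T(u, v, f·w) = f·T(u,v,w) for all f ∈ R. -/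
namespace AlgebraicCourantAlgebroid

variable {R : Type*} [CommRing R] {E : Type*} [AddCommGroup E] [Module R E]
  (C : AlgebraicCourantAlgebroid R E) (D : E → E → E)

def torsion (u v w : E) : R :=
  C.pair (D u v - D v u - C.bracket u v) w + C.pair (D w u) v

section MetricCompatible

variable {C D}
  (hD_metric : ∀ u v w : E, C.rho u (C.pair v w) = C.pair (D u v) w + C.pair v (D u w))
include hD_metric

theorem torsion_swap_left (u v w : E) : C.torsion D u v w = -C.torsion D v u w := by
  have hbracket := congrArg (fun x => C.pair x w) (C.bracket_symm u v)
  simp only [map_add, LinearMap.add_apply] at hbracket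
  have hDop := C.pair_Dop (C.pair u v) w
  have hmetric := hD_metric w u v
  rw [C.pair_comm u (D w v)] at hmetric
  simp only [torsion, map_sub, LinearMap.sub_apply]
  linear_combination -hbracket - hDop - hmetric

theorem torsion_swap_right (u v w : E) : C.torsion D u v w = -C.torsion D u w v := by
  have hmetric := hD_metric u v w
  have hinvariant := C.rho_pair u v w
  rw [C.pair_comm v (D u w)] at hmetric
  rw [C.pair_comm v (C.bracket u w)] at hinvariant
  simp only [torsion, map_sub, LinearMap.sub_apply]
  linear_combination hinvariant - hmetric

theorem torsion_cycle (u v w : E) : C.torsion D u v w = C.torsion D v w u := by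
  rw [torsion_swap_left hD_metric, torsion_swap_right hD_metric, neg_neg]

end MetricCompatible

theorem torsion_smul_right (hD_smul_left : ∀ (f : R) (u v : E), D (f • u) v = f • D u v)
    (u v w : E) (f : R) : C.torsion D u v (f • w) = f * C.torsion D u v w := by
  simp only [torsion, hD_smul_left, map_smul, LinearMap.smul_apply, smul_eq_mul, mul_add]

end AlgebraicCourantAlgebroid

theorem torsion_antisymm_and_tensorial_general {R : Type*} [CommRing R] {E : Type*} [AddCommGroup E]
    [Module R E] (C : AlgebraicCourantAlgebroid R E)
    (D : E → E → E)
    (hD_smul_left : ∀ (f : R) (u v : E), D (f • u) v = f • D u v)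
    (hD_metric : ∀ u v w : E,
      C.rho u (C.pair v w) = C.pair (D u v) w + C.pair v (D u w)) :
    ∀ T : E → E → E → R,
      (∀ u v w : E,
        T u v w = C.pair (D u v - D v u - C.bracket u v) w + C.pair (D w u) v) →
      ∀ (u v w : E) (f : R),
        T u v w = - T v u w ∧
        T u v w = - T u w v ∧
        T (f • u) v w = f * T u v w ∧
        T u (f • v) w = f * T u v w ∧
        T u v (f • w) = f * T u v w := by
  intro T hT u v w f
  obtain rfl : T = C.torsion D := funext₃ hT
  have cycle := AlgebraicCourantAlgebroid.torsion_cycle hD_metric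
  have smul_right := C.torsion_smul_right D hD_smul_left
  refine ⟨AlgebraicCourantAlgebroid.torsion_swap_left hD_metric u v w,
    AlgebraicCourantAlgebroid.torsion_swap_right hD_metric u v w, ?_, ?_, smul_right u v w f⟩
  · rw [cycle, smul_right, ← cycle]
  · rw [← cycle, smul_right, cycle]

/-- The torsion `T(u,v,w) = ⟨D_u v − D_v u − [u,v], w⟩ + ⟨D_w u, v⟩` of a Courant algebroid
connection is totally antisymmetric and `R`-linear in each argument (a tensor in `Λ³E`). -/
theorem torsion_antisymm_and_tensorial {R : Type*} [CommRing R] {E : Type*} [AddCommGroup E]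
    [Module R E] (C : AlgebraicCourantAlgebroid R E)
    (D : E → E → E)
    (hD_add_left : ∀ u v w : E, D (u + v) w = D u w + D v w)
    (hD_add_right : ∀ u v w : E, D u (v + w) = D u v + D u w)
    (hD_smul_left : ∀ (f : R) (u v : E), D (f • u) v = f • D u v)
    (hD_smul_right : ∀ (u : E) (f : R) (v : E), D u (f • v) = f • D u v + C.rho u f • v)
    (hD_metric : ∀ u v w : E,
      C.rho u (C.pair v w) = C.pair (D u v) w + C.pair v (D u w)) :
    ∀ T : E → E → E → R,
      (∀ u v w : E,
        T u v w = C.pair (D u v - D v u - C.bracket u v) w + C.pair (D w u) v) →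
      ∀ (u v w : E) (f : R),
        T u v w = - T v u w ∧
        T u v w = - T u w v ∧
        T (f • u) v w = f * T u v w ∧
        T u (f • v) w = f * T u v w ∧
        T u v (f • w) = f * T u v w :=
  torsion_antisymm_and_tensorial_general C D hD_smul_left hD_metric
end
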